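/- arXiv:2503.21308 — 9 statements merged into one kernel-verified Lean document; each statement's English description precedes it below -/
import Mathlib

section
/- Let A be a bicommutative algebra with derivation d, and define a≻b := d(a)b, a≺b := a d(b). Then (a≻b)≻c − (a≻c)≺b = (a≻c)≻b − (a≻b)≺c for all a,b,c ∈ A. -/
theorem stmt_6 {A : Type*} [NonUnitalNonAssocRing A] (d : A → A)
    (hadd : ∀ a b : A, d (a + b) = d a + d b)
    (hd : ∀ a b : A, d (a * b) = d a * b + a * d b)
    (hl : ∀ a b c : A, a * (b * c) = b * (a * c))
    (hr : ∀ a b c : A, (a * b) * c = (a * c) * b) :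
    ∀ a b c : A, d (d a * b) * c - (d a * c) * d b = d (d a * c) * b - (d a * b) * d c := by
  intro a b c
  rw [hd, hd, add_mul, add_mul, hr (d a) (d b) c, hr (d a) (d c) b, hr (d (d a)) b c]
  abel
end

section
/- Let A be a bicommutative algebra with derivation d, and define a≻b := d(a)b, a≺b := a d(b). Then a≺(b≺c) − b≻(a≺c) = b≺(a≺c) − a≻(b≺c) for all a,b,c ∈ A. -/
theorem stmt_7 {A : Type*} [NonUnitalNonAssocRing A] (d : A → A)
    (hadd : ∀ a b : A, d (a + b) = d a + d b)
    (hd : ∀ a b : A, d (a * b) = d a * b + a * d b)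
    (hl : ∀ a b c : A, a * (b * c) = b * (a * c))
    (hr : ∀ a b c : A, (a * b) * c = (a * c) * b) :
    ∀ a b c : A, a * d (b * d c) - d b * (a * d c) = b * d (a * d c) - d a * (b * d c) := by
  intro a b c
  rw [hd, hd, mul_add, mul_add, hl a (d b), hl b (d a), hl a b]
  abel
end

section
/- Let A be an alternative algebra with derivation d (i.e., A satisfies the linearized identities (ab)c − a(bc) = −(ba)c + b(ac) and (ab)c − a(bc) = −(ac)b + a(cb)), and define a≻b := d(a)b, a≺b := a d(b). Then x₁·(d(x₂)·d(x₃)) = (x₁≺x₂)≺x₃ + (x₂≻x₁)≺x₃ − x₂≻(x₁≺x₃) for all x₁,x₂,x₃ ∈ A. -/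
theorem stmt_8 {A : Type*} [NonUnitalNonAssocRing A] (d : A → A)
    (hadd : ∀ a b : A, d (a + b) = d a + d b)
    (hd : ∀ a b : A, d (a * b) = d a * b + a * d b)
    (hlalt : ∀ a b c : A, (a * b) * c - a * (b * c) = -((b * a) * c) + b * (a * c))
    (hralt : ∀ a b c : A, (a * b) * c - a * (b * c) = -((a * c) * b) + a * (c * b)) :
    ∀ x₁ x₂ x₃ : A, x₁ * (d x₂ * d x₃) =
      (x₁ * d x₂) * d x₃ + (d x₂ * x₁) * d x₃ - d x₂ * (x₁ * d x₃) := by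
  intro x₁ x₂ x₃
  have h := hlalt (d x₂) x₁ (d x₃)
  rw [show (x₁ * d x₂) * d x₃ + (d x₂ * x₁) * d x₃ - d x₂ * (x₁ * d x₃)
      = (x₁ * d x₂) * d x₃ + ((d x₂ * x₁) * d x₃ - d x₂ * (x₁ * d x₃)) from by abel, h]
  abel
end

section
/- Let A be an alternative algebra with derivation d, with operations a≻b := d(a)b, a≺b := a d(b). Then x₁·(x₂·d(d(x₃))) = x₁≺(x₂≺x₃) − (x₁≺x₂)≺x₃ − (x₂≻x₁)≺x₃ + x₂≻(x₁≺x₃) for all x₁,x₂,x₃ ∈ A. -/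
theorem stmt_9 {A : Type*} [NonUnitalNonAssocRing A] (d : A → A)
    (hadd : ∀ a b : A, d (a + b) = d a + d b)
    (hd : ∀ a b : A, d (a * b) = d a * b + a * d b)
    (hlalt : ∀ a b c : A, (a * b) * c - a * (b * c) = -((b * a) * c) + b * (a * c))
    (hralt : ∀ a b c : A, (a * b) * c - a * (b * c) = -((a * c) * b) + a * (c * b)) :
    ∀ x₁ x₂ x₃ : A, x₁ * (x₂ * d (d x₃)) =
      x₁ * d (x₂ * d x₃) - (x₁ * d x₂) * d x₃ - (d x₂ * x₁) * d x₃ + d x₂ * (x₁ * d x₃) := by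
  intro x₁ x₂ x₃
  have h := hlalt x₁ (d x₂) (d x₃)
  rw [hd, mul_add]
  linear_combination (norm := abel) h
end

section
/- Let A be an alternative algebra with derivation d, with operations a≻b := d(a)b, a≺b := a d(b). Then d(d(x₁))·(x₂·x₃) equals the sum (x₁≻x₂)≻x₃ − x₁≻(x₂≻x₃) + (x₁≻x₃)≺x₂ − x₁≻(x₃≺x₂) + (x₂≺x₁)≻x₃ − x₂≻(x₁≻x₃) + (x₂≻x₃)≺x₁ − x₂≻(x₃≺x₁) − x₂≺(x₁≻x₃) + (x₂≺x₁)≺x₃ + (x₁≻x₂)≺x₃ − x₁≻(x₂≺x₃). -/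
theorem stmt_10 {A : Type*} [NonUnitalNonAssocRing A] (d : A → A)
    (hadd : ∀ a b : A, d (a + b) = d a + d b)
    (hd : ∀ a b : A, d (a * b) = d a * b + a * d b)
    (hlalt : ∀ a b c : A, (a * b) * c - a * (b * c) = -((b * a) * c) + b * (a * c))
    (hralt : ∀ a b c : A, (a * b) * c - a * (b * c) = -((a * c) * b) + a * (c * b)) :
    ∀ x₁ x₂ x₃ : A, d (d x₁) * (x₂ * x₃) =
      d (d x₁ * x₂) * x₃ - d x₁ * (d x₂ * x₃) + (d x₁ * x₃) * d x₂ - d x₁ * (x₃ * d x₂)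
      + d (x₂ * d x₁) * x₃ - d x₂ * (d x₁ * x₃) + (d x₂ * x₃) * d x₁ - d x₂ * (x₃ * d x₁)
      - x₂ * d (d x₁ * x₃) + (x₂ * d x₁) * d x₃ + (d x₁ * x₂) * d x₃ - d x₁ * (x₂ * d x₃) := by
  intro x₁ x₂ x₃
  rw [hd (d x₁) x₂, hd x₂ (d x₁), hd (d x₁) x₃]
  simp only [add_mul, mul_add]
  linear_combination (norm := abel)
    (-1 : ℤ) • hlalt (d (d x₁)) x₂ x₃ - hlalt x₂ (d x₁) (d x₃)
      - hralt (d x₁) x₃ (d x₂) - hralt (d x₂) x₃ (d x₁)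
end

section
/- Let A be an alternative algebra with derivation d, and define a≻b := d(a)b, a≺b := a d(b). Then (a≻b)≺c − a≻(b≺c) = −(c≻b)≺a + c≻(b≺a) for all a,b,c ∈ A. -/
theorem stmt_11 {A : Type*} [NonUnitalNonAssocRing A] (d : A → A)
    (hadd : ∀ a b : A, d (a + b) = d a + d b)
    (hd : ∀ a b : A, d (a * b) = d a * b + a * d b)
    (hlalt : ∀ a b c : A, (a * b) * c - a * (b * c) = -((b * a) * c) + b * (a * c))
    (hralt : ∀ a b c : A, (a * b) * c - a * (b * c) = -((a * c) * b) + a * (c * b)) :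
    ∀ a b c : A, (d a * b) * d c - d a * (b * d c) =
      -((d c * b) * d a) + d c * (b * d a) := by
  intro a b c
  set x := d a
  set y := d c
  have h1 := hlalt x b y
  have h2 := hralt b x y
  have h3 := hlalt y b x
  calc (x * b) * y - x * (b * y)
      = -((b * x) * y) + b * (x * y) := h1
    _ = -((b * x) * y - b * (x * y)) := by abel
    _ = -(-((b * y) * x) + b * (y * x)) := by rw [h2]
    _ = (b * y) * x - b * (y * x) := by abel
    _ = -(-((b * y) * x) + b * (y * x)) + 0 := by abel
    _ = -((y * b) * x - y * (b * x)) + 0 := by rw [h3]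
    _ = -((y * b) * x) + y * (b * x) := by abel
end

section
/- Let A be an alternative algebra with derivation d, and define a≻b := d(a)b, a≺b := a d(b). Then (a≺b)≻c − a≻(b≻c) + (a≻c)≺b − a≻(c≺b) − a≺(b≻c) + (a≺b)≺c + (b≻a)≺c − b≻(a≺c) = −(c≺b)≻a + c≻(b≻a) − (c≻a)≺b + c≻(a≺b) + c≺(b≻a) − (c≺b)≺a − (b≻c)≺a + b≻(c≺a) for all a,b,c ∈ A. -/
theorem stmt_12 {A : Type*} [NonUnitalNonAssocRing A] (d : A → A)
    (hadd : ∀ a b : A, d (a + b) = d a + d b)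
    (hd : ∀ a b : A, d (a * b) = d a * b + a * d b)
    (hlalt : ∀ a b c : A, (a * b) * c - a * (b * c) = -((b * a) * c) + b * (a * c))
    (hralt : ∀ a b c : A, (a * b) * c - a * (b * c) = -((a * c) * b) + a * (c * b)) :
    ∀ a b c : A,
      d (a * d b) * c - d a * (d b * c) + (d a * c) * d b - d a * (c * d b)
        - a * d (d b * c) + (a * d b) * d c + (d b * a) * d c - d b * (a * d c) =
      -(d (c * d b) * a) + d c * (d b * a) - (d c * a) * d b + d c * (a * d b)
        + c * d (d b * a) - (c * d b) * d a - (d b * c) * d a + d b * (c * d a) := by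
  intro a b c
  simp only [hd, add_mul, mul_add]
  linear_combination (norm := abel)
    hralt (d a) (d b) c + hlalt a (d b) (d c) + hralt (d c) (d b) a +
      hlalt c (d b) (d a) + hlalt a (d (d b)) c - hralt (d (d b)) a c +
      hlalt (d (d b)) c a
end

section
/- Let A be an assosymmetric algebra with derivation d (A satisfies (a,b,c)=(b,a,c) and (a,b,c)=(a,c,b), where (a,b,c)=(ab)c−a(bc)), and define a≻b := d(a)b, a≺b := a d(b). Then (a≻c)≺b − a≻(c≺b) = (b≻c)≺a − b≻(c≺a) for all a,b,c ∈ A. -/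
theorem stmt_13 {A : Type*} [NonUnitalNonAssocRing A] (d : A → A)
    (hadd : ∀ a b : A, d (a + b) = d a + d b)
    (hd : ∀ a b : A, d (a * b) = d a * b + a * d b)
    (hls : ∀ a b c : A, (a * b) * c - a * (b * c) = (b * a) * c - b * (a * c))
    (hrs : ∀ a b c : A, (a * b) * c - a * (b * c) = (a * c) * b - a * (c * b)) :
    ∀ a b c : A, (d a * c) * d b - d a * (c * d b) = (d b * c) * d a - d b * (c * d a) := by
  intro a b c
  rw [hls (d a) c (d b), hrs c (d a) (d b), hls c (d b) (d a)]
end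

section
/- Let A be an assosymmetric algebra with derivation d, and define a≻b := d(a)b, a≺b := a d(b). Then (a≺c)≻b − a≻(c≻b) − (a≻b)≺c + a≻(b≺c) − a≺(c≻b) + (a≺c)≺b − (c≻a)≺b + c≻(a≺b) = (b≺c)≻a − b≻(c≻a) − (b≻a)≺c + b≻(a≺c) − b≺(c≻a) + (b≺c)≺a − (c≻b)≺a + c≻(b≺a) for all a,b,c ∈ A. -/
theorem stmt_14 {A : Type*} [NonUnitalNonAssocRing A] (d : A → A)
    (hadd : ∀ a b : A, d (a + b) = d a + d b)
    (hd : ∀ a b : A, d (a * b) = d a * b + a * d b)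
    (hls : ∀ a b c : A, (a * b) * c - a * (b * c) = (b * a) * c - b * (a * c))
    (hrs : ∀ a b c : A, (a * b) * c - a * (b * c) = (a * c) * b - a * (c * b)) :
    ∀ a b c : A,
      d (a * d c) * b - d a * (d c * b) - (d a * b) * d c + d a * (b * d c)
        - a * d (d c * b) + (a * d c) * d b - (d c * a) * d b + d c * (a * d b) =
      d (b * d c) * a - d b * (d c * a) - (d b * a) * d c + d b * (a * d c)
        - b * d (d c * a) + (b * d c) * d a - (d c * b) * d a + d c * (b * d a) := by
  intro a b c
  rw [hd a (d c), hd (d c) b, hd b (d c), hd (d c) a]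
  linear_combination (norm := noncomm_ring)
    hrs (d a) (d c) b - hrs (d b) (d c) a + hls a (d c) (d b) - hls b (d c) (d a)
      + hrs a (d (d c)) b + hls a b (d (d c)) + hrs b a (d (d c))
end
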